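/- Let α, β > 0 and let b ∈ ℝ^{n+m}. For every initial vector u⁰ ∈ ℝ^{n+m}, the sequence defined by u^{k+1} = M_{α,β}⁻¹ (N_{α,β} u^k + b) converges to the unique solution u* of the linear system 𝒜 u = b. -/

import Mathlib

/-!
Write `Ω = shiftMatrix α β = diag(αI, βI) = M + N`, so that `𝒜 = M - N`. If `M y = N x` then
`Ω (x - y) = 𝒜 (x + y)`, hence with `w = x + y`
`xᵀΩx - yᵀΩy = wᵀ𝒜w = w₁ᵀAw₁ + w₂ᵀCw₂ ≥ 0`,
so the error of the iteration never grows in the `Ω`-norm. Equality forces `w₁ = 0`, `Cw₂ = 0`,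
i.e. `y = (-x₁, x₂)` and `α x₁ = Bᵀ x₂`; two equality steps in a row give `α x₁ = -α x₁`, so
`x₁ = 0` and then `x₂ = 0` because `Bᵀ` is injective. Thus two steps strictly decrease the
`Ω`-norm off `0`, and by compactness of the unit sphere they contract it by a uniform factor
`c < 1`.
-/

open Matrix Filter Topology

section Lyapunov

variable {E : Type*} [NormedAddCommGroup E] [NormedSpace ℝ E]

structure IsPosDefHomogeneous (V : E → ℝ) : Prop where
  continuous : Continuous V
  map_smul : ∀ (t : ℝ) x, V (t • x) = t ^ 2 * V x
  pos : ∀ x ≠ 0, 0 < V x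

theorem map_zero_of_homogeneous {F : E → ℝ} (hF : ∀ (t : ℝ) x, F (t • x) = t ^ 2 * F x) :
    F 0 = 0 := by
  simpa using hF 0 0

theorem IsPosDefHomogeneous.nonneg {V : E → ℝ} (hV : IsPosDefHomogeneous V) (x : E) :
    0 ≤ V x := by
  rcases eq_or_ne x 0 with rfl | hx
  · exact (map_zero_of_homogeneous hV.map_smul).ge
  · exact (hV.pos x hx).le

theorem le_of_le_on_unitSphere {F G : E → ℝ} (hF : ∀ (t : ℝ) x, F (t • x) = t ^ 2 * F x)
    (hG : ∀ (t : ℝ) x, G (t • x) = t ^ 2 * G x) (h : ∀ x, ‖x‖ = 1 → F x ≤ G x) (x : E) :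
    F x ≤ G x := by
  rcases eq_or_ne x 0 with rfl | hx
  · rw [map_zero_of_homogeneous hF, map_zero_of_homogeneous hG]
  · have hx' : ‖x‖ ≠ 0 := norm_ne_zero_iff.mpr hx
    have hu := h (‖x‖⁻¹ • x) (by rw [norm_smul, norm_inv, norm_norm, inv_mul_cancel₀ hx'])
    rw [← smul_inv_smul₀ hx' x, hF, hG]
    gcongr

variable [FiniteDimensional ℝ E] {V : E → ℝ}

theorem IsPosDefHomogeneous.exists_pos_mul_norm_sq_le (hV : IsPosDefHomogeneous V) :
    ∃ μ > 0, ∀ x, μ * ‖x‖ ^ 2 ≤ V x := by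
  obtain ⟨μ, hμ, hμV⟩ :=
    (isCompact_sphere (0 : E) 1).exists_forall_le' hV.continuous.continuousOn fun x hx =>
      hV.pos x (ne_zero_of_mem_unit_sphere ⟨x, hx⟩)
  refine ⟨μ, hμ, le_of_le_on_unitSphere (fun t x => ?_) hV.map_smul fun x hx => ?_⟩
  · rw [norm_smul, mul_pow, Real.norm_eq_abs, sq_abs]; ring
  · simpa [hx] using hμV x (mem_sphere_zero_iff_norm.mpr hx)

theorem IsPosDefHomogeneous.exists_lt_one_forall_le_mul (hV : IsPosDefHomogeneous V)
    (S : E →ₗ[ℝ] E) (hS : ∀ x ≠ 0, V (S x) < V x) :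
    ∃ c, 0 ≤ c ∧ c < 1 ∧ ∀ x, V (S x) ≤ c * V x := by
  have hsphere : ∀ x ∈ Metric.sphere (0 : E) 1, 0 < V x :=
    fun x hx => hV.pos x (ne_zero_of_mem_unit_sphere ⟨x, hx⟩)
  obtain ⟨δ, hδ, hδV⟩ := (isCompact_sphere (0 : E) 1).exists_forall_le' (a := 0)
    (f := fun x => 1 - V (S x) / V x)
    (continuousOn_const.sub
      ((hV.continuous.comp S.continuous_of_finiteDimensional).continuousOn.div
        hV.continuous.continuousOn fun x hx => (hsphere x hx).ne'))
    fun x hx => sub_pos.mpr <|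
      (div_lt_one (hsphere x hx)).mpr (hS x (ne_zero_of_mem_unit_sphere ⟨x, hx⟩))
  refine ⟨max (1 - δ) 0, le_max_right _ _, max_lt (by linarith) one_pos, fun x => ?_⟩
  refine le_of_le_on_unitSphere (F := fun x => V (S x)) (G := fun x => max (1 - δ) 0 * V x)
    (fun t x => by simp [hV.map_smul]) (fun t x => by simp only [hV.map_smul]; ring)
    (fun x hx => ?_) x
  have hx' := hsphere x (mem_sphere_zero_iff_norm.mpr hx)
  have hratio := hδV x (mem_sphere_zero_iff_norm.mpr hx)
  rw [le_sub_comm, div_le_iff₀ hx'] at hratio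
  exact hratio.trans (mul_le_mul_of_nonneg_right (le_max_left _ _) hx'.le)

theorem IsPosDefHomogeneous.tendsto_zero_of_two_step_lt (hV : IsPosDefHomogeneous V)
    (T : E →ₗ[ℝ] E) (hT : ∀ x, V (T x) ≤ V x) (hT2 : ∀ x ≠ 0, V (T (T x)) < V x) {e : ℕ → E}
    (he : ∀ k, e (k + 1) = T (e k)) : Tendsto e atTop (𝓝 0) := by
  obtain ⟨μ, hμ, hμV⟩ := hV.exists_pos_mul_norm_sq_le
  obtain ⟨c, hc0, hc1, hcV⟩ := hV.exists_lt_one_forall_le_mul (T ∘ₗ T) hT2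
  have hanti : Antitone (V ∘ e) := antitone_nat_of_succ_le fun k => by simp [he, hT]
  have heven : ∀ j, V (e (2 * j)) ≤ c ^ j * V (e 0) := by
    intro j
    induction j with
    | zero => simp
    | succ j ih =>
      calc V (e (2 * (j + 1))) = V (T (T (e (2 * j)))) := by rw [mul_add, he, he]
        _ ≤ c * V (e (2 * j)) := hcV _
        _ ≤ c ^ (j + 1) * V (e 0) := by
          rw [pow_succ', mul_assoc]; exact mul_le_mul_of_nonneg_left ih hc0
  have hbound : ∀ k, ‖e k‖ ≤ √(c ^ (k / 2) * V (e 0) / μ) := fun k => by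
    rw [Real.le_sqrt (norm_nonneg _) (div_nonneg (mul_nonneg (pow_nonneg hc0 _) (hV.nonneg _))
      hμ.le), le_div_iff₀ hμ, mul_comm]
    exact (hμV _).trans ((hanti (Nat.mul_div_le k 2)).trans (heven _))
  refine squeeze_zero_norm hbound ?_
  simpa using (((tendsto_pow_atTop_nhds_zero_of_lt_one hc0 hc1).comp
    (Nat.tendsto_div_const_atTop two_ne_zero)).mul_const (V (e 0))).div_const μ |>.sqrt

end Lyapunov

section MatrixFacts

variable {ι : Type*} [Fintype ι]

theorem isPosDefHomogeneous_dotProduct_mulVec {P : Matrix ι ι ℝ} (hP : P.PosDef) :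
    IsPosDefHomogeneous fun x => x ⬝ᵥ (P *ᵥ x) where
  continuous := continuous_id.dotProduct (continuous_const.matrix_mulVec continuous_id)
  map_smul t x := by simp only [mulVec_smul, smul_dotProduct, dotProduct_smul, smul_eq_mul]; ring
  pos x hx := by simpa using hP.dotProduct_mulVec_pos hx

theorem dotProduct_mulVec_sub_dotProduct_mulVec {R : Type*} [CommRing R] {P : Matrix ι ι R}
    (hP : P.IsSymm) (x y : ι → R) :
    x ⬝ᵥ (P *ᵥ x) - y ⬝ᵥ (P *ᵥ y) = (x + y) ⬝ᵥ (P *ᵥ (x - y)) := by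
  have hxy : y ⬝ᵥ (P *ᵥ x) = x ⬝ᵥ (P *ᵥ y) := by
    conv_lhs => rw [← hP.eq]
    rw [dotProduct_mulVec, vecMul_transpose, dotProduct_comm]
  simp only [mulVec_sub, dotProduct_sub, add_dotProduct, hxy]
  ring

theorem add_mulVec_sub_eq_sub_mulVec_add {R : Type*} [Ring R] {M N : Matrix ι ι R} {x y : ι → R}
    (h : M *ᵥ y = N *ᵥ x) : (M + N) *ᵥ (x - y) = (M - N) *ᵥ (x + y) := by
  simp only [add_mulVec, sub_mulVec, mulVec_add, mulVec_sub, h]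
  abel

theorem isUnit_det_of_mulVec_eq_zero {K : Type*} [Field K] [DecidableEq ι] {P : Matrix ι ι K}
    (h : ∀ x, P *ᵥ x = 0 → x = 0) : IsUnit P.det :=
  isUnit_iff_ne_zero.mpr fun hdet =>
    let ⟨v, hv, hPv⟩ := exists_mulVec_eq_zero_iff.mpr hdet
    hv (h v hPv)

theorem mulVec_transpose_injective_of_rank_eq {κ K : Type*} [Fintype κ] [Field K]
    {B : Matrix κ ι K} (hB : B.rank = Fintype.card κ) : Function.Injective Bᵀ.mulVec := by
  have hrank := LinearMap.finrank_range_add_finrank_ker Bᵀ.mulVecLin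
  change Bᵀ.rank + _ = _ at hrank
  rw [rank_transpose, hB, Module.finrank_fintype_fun_eq_card] at hrank
  have hker : Module.finrank K (LinearMap.ker Bᵀ.mulVecLin) = 0 := by omega
  exact LinearMap.ker_eq_bot.mp (Submodule.finrank_eq_zero.mp hker)

theorem splitting_error_eq {K : Type*} [Field K] [DecidableEq ι] {M N : Matrix ι ι K}
    (hM : IsUnit M.det) {x b : ι → K} (hx : (M - N) *ᵥ x = b) (u : ι → K) :
    M⁻¹ *ᵥ (N *ᵥ u + b) - x = (M⁻¹ * N) *ᵥ (u - x) := by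
  have hMx : M⁻¹ *ᵥ (M *ᵥ x) = x := by rw [mulVec_mulVec, nonsing_inv_mul _ hM, one_mulVec]
  rw [← hx, ← mulVec_mulVec]
  simp only [sub_mulVec, mulVec_add, mulVec_sub, hMx]
  abel

theorem sumElim_dotProduct_fromBlocks_mulVec_sumElim {κ R : Type*} [Fintype κ] [CommRing R]
    (A : Matrix ι ι R) (B : Matrix κ ι R) (C : Matrix κ κ R) (w₁ : ι → R) (w₂ : κ → R) :
    Sum.elim w₁ w₂ ⬝ᵥ (fromBlocks A Bᵀ (-B) C *ᵥ Sum.elim w₁ w₂)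
      = w₁ ⬝ᵥ (A *ᵥ w₁) + w₂ ⬝ᵥ (C *ᵥ w₂) := by
  have hB : w₁ ⬝ᵥ (Bᵀ *ᵥ w₂) = w₂ ⬝ᵥ (B *ᵥ w₁) := by
    rw [dotProduct_mulVec, vecMul_transpose, dotProduct_comm]
  simp only [fromBlocks_mulVec, Sum.elim_comp_inl, Sum.elim_comp_inr, sumElim_dotProduct_sumElim,
    dotProduct_add, neg_mulVec, dotProduct_neg, hB]
  ring

end MatrixFacts

section ShiftSplitting

variable {ι κ : Type*} [DecidableEq ι] [DecidableEq κ]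

def shiftMatrix (α β : ℝ) : Matrix (ι ⊕ κ) (ι ⊕ κ) ℝ := fromBlocks (α • 1) 0 0 (β • 1)

variable {α β : ℝ}

theorem shiftMatrix_isSymm : (shiftMatrix α β : Matrix (ι ⊕ κ) (ι ⊕ κ) ℝ).IsSymm := by
  simp [shiftMatrix, IsSymm, fromBlocks_transpose]

variable [Fintype ι] [Fintype κ]

def shiftNormSq (α β : ℝ) (x : ι ⊕ κ → ℝ) : ℝ := x ⬝ᵥ (shiftMatrix α β *ᵥ x)

theorem shiftMatrix_mulVec_sumElim (x₁ : ι → ℝ) (x₂ : κ → ℝ) :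
    shiftMatrix α β *ᵥ Sum.elim x₁ x₂ = Sum.elim (α • x₁) (β • x₂) := by
  simp [shiftMatrix, fromBlocks_mulVec, smul_mulVec]

theorem isPosDefHomogeneous_shiftNormSq (hα : 0 < α) (hβ : 0 < β) :
    IsPosDefHomogeneous (shiftNormSq α β : (ι ⊕ κ → ℝ) → ℝ) := by
  refine isPosDefHomogeneous_dotProduct_mulVec ?_
  rw [shiftMatrix, smul_one_eq_diagonal, smul_one_eq_diagonal, fromBlocks_diagonal,
    posDef_diagonal_iff]
  rintro (i | i)
  exacts [hα, hβ]

variable {A : Matrix ι ι ℝ} {B : Matrix κ ι ℝ} {C : Matrix κ κ ℝ}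
  {M N : Matrix (ι ⊕ κ) (ι ⊕ κ) ℝ}

theorem shiftNormSq_sub_shiftNormSq_of_step (hadd : M + N = shiftMatrix α β)
    (hsub : M - N = fromBlocks A Bᵀ (-B) C) {x₁ y₁ : ι → ℝ} {x₂ y₂ : κ → ℝ}
    (hy : M *ᵥ Sum.elim y₁ y₂ = N *ᵥ Sum.elim x₁ x₂) :
    shiftNormSq α β (Sum.elim x₁ x₂) - shiftNormSq α β (Sum.elim y₁ y₂)
      = (x₁ + y₁) ⬝ᵥ (A *ᵥ (x₁ + y₁)) + (x₂ + y₂) ⬝ᵥ (C *ᵥ (x₂ + y₂)) := by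
  rw [shiftNormSq, shiftNormSq, dotProduct_mulVec_sub_dotProduct_mulVec shiftMatrix_isSymm,
    ← hadd, add_mulVec_sub_eq_sub_mulVec_add hy, hsub, ← Sum.elim_add_add,
    sumElim_dotProduct_fromBlocks_mulVec_sumElim]

theorem shiftNormSq_le_of_step (hA : A.PosSemidef) (hC : C.PosSemidef)
    (hadd : M + N = shiftMatrix α β) (hsub : M - N = fromBlocks A Bᵀ (-B) C) {x y : ι ⊕ κ → ℝ}
    (hy : M *ᵥ y = N *ᵥ x) : shiftNormSq α β y ≤ shiftNormSq α β x := by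
  rw [← Sum.elim_comp_inl_inr x, ← Sum.elim_comp_inl_inr y] at hy ⊢
  have hdiff := shiftNormSq_sub_shiftNormSq_of_step hadd hsub hy
  have hA' := hA.dotProduct_mulVec_nonneg (x ∘ Sum.inl + y ∘ Sum.inl)
  have hC' := hC.dotProduct_mulVec_nonneg (x ∘ Sum.inr + y ∘ Sum.inr)
  simp only [star_trivial] at hA' hC'
  linarith

theorem eq_of_shiftNormSq_eq_of_step (hA : A.PosDef) (hC : C.PosSemidef) (hβ : β ≠ 0)
    (hadd : M + N = shiftMatrix α β) (hsub : M - N = fromBlocks A Bᵀ (-B) C) {x₁ : ι → ℝ}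
    {x₂ : κ → ℝ} {y : ι ⊕ κ → ℝ} (hy : M *ᵥ y = N *ᵥ Sum.elim x₁ x₂)
    (heq : shiftNormSq α β y = shiftNormSq α β (Sum.elim x₁ x₂)) :
    y = Sum.elim (-x₁) x₂ ∧ α • x₁ = Bᵀ *ᵥ x₂ := by
  obtain ⟨y₁, y₂, rfl⟩ : ∃ y₁ y₂, y = Sum.elim y₁ y₂ := ⟨_, _, (Sum.elim_comp_inl_inr y).symm⟩
  have hdiff := shiftNormSq_sub_shiftNormSq_of_step hadd hsub hy
  rw [heq, sub_self] at hdiff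
  have hA' := hA.posSemidef.dotProduct_mulVec_nonneg (x₁ + y₁)
  have hC' := hC.dotProduct_mulVec_nonneg (x₂ + y₂)
  simp only [star_trivial] at hA' hC'
  have h₁ : x₁ + y₁ = 0 := by
    by_contra h
    have := hA.dotProduct_mulVec_pos h
    simp only [star_trivial] at this
    linarith
  have h₂ : C *ᵥ (x₂ + y₂) = 0 :=
    (hC.dotProduct_mulVec_zero_iff _).mp (by simp only [star_trivial]; linarith)
  have hstep := add_mulVec_sub_eq_sub_mulVec_add hy
  rw [hadd, hsub, ← Sum.elim_sub_sub, ← Sum.elim_add_add, shiftMatrix_mulVec_sumElim,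
    fromBlocks_mulVec, Sum.elim_comp_inl, Sum.elim_comp_inr, h₁, h₂, Sum.elim_eq_iff] at hstep
  simp only [mulVec_zero, zero_add, add_zero, smul_eq_zero, hβ, false_or, sub_eq_zero] at hstep
  obtain ⟨hinl, rfl⟩ := hstep
  obtain rfl : y₁ = -x₁ := eq_neg_of_add_eq_zero_right h₁
  refine ⟨rfl, ?_⟩
  rw [mulVec_add] at hinl
  linear_combination (norm := module) (1 / 2 : ℝ) • hinl

theorem eq_zero_of_shiftNormSq_eq_of_two_steps (hA : A.PosDef) (hC : C.PosSemidef) (hα : α ≠ 0)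
    (hβ : β ≠ 0) (hB : Function.Injective Bᵀ.mulVec) (hadd : M + N = shiftMatrix α β)
    (hsub : M - N = fromBlocks A Bᵀ (-B) C) {x y z : ι ⊕ κ → ℝ} (hy : M *ᵥ y = N *ᵥ x)
    (hz : M *ᵥ z = N *ᵥ y) (heq : shiftNormSq α β z = shiftNormSq α β x) : x = 0 := by
  have hxy := shiftNormSq_le_of_step hA.posSemidef hC hadd hsub hy
  have hyz := shiftNormSq_le_of_step hA.posSemidef hC hadd hsub hz
  obtain ⟨x₁, x₂, rfl⟩ : ∃ x₁ x₂, x = Sum.elim x₁ x₂ := ⟨_, _, (Sum.elim_comp_inl_inr x).symm⟩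
  obtain ⟨rfl, hx⟩ := eq_of_shiftNormSq_eq_of_step hA hC hβ hadd hsub hy (by linarith)
  obtain ⟨-, hx'⟩ := eq_of_shiftNormSq_eq_of_step hA hC hβ hadd hsub hz (by linarith)
  obtain rfl : x₁ = 0 := self_eq_neg.mp (smul_right_injective _ hα (hx.trans hx'.symm))
  obtain rfl : x₂ = 0 := hB (by simpa using hx.symm)
  exact Sum.elim_zero_zero

theorem shiftNormSq_lt_of_two_steps (hA : A.PosDef) (hC : C.PosSemidef) (hα : α ≠ 0)
    (hβ : β ≠ 0) (hB : Function.Injective Bᵀ.mulVec) (hadd : M + N = shiftMatrix α β)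
    (hsub : M - N = fromBlocks A Bᵀ (-B) C) {x y z : ι ⊕ κ → ℝ} (hx : x ≠ 0)
    (hy : M *ᵥ y = N *ᵥ x) (hz : M *ᵥ z = N *ᵥ y) : shiftNormSq α β z < shiftNormSq α β x :=
  ((shiftNormSq_le_of_step hA.posSemidef hC hadd hsub hz).trans
    (shiftNormSq_le_of_step hA.posSemidef hC hadd hsub hy)).lt_of_ne fun h =>
      hx (eq_zero_of_shiftNormSq_eq_of_two_steps hA hC hα hβ hB hadd hsub hy hz h)

theorem eq_zero_of_mulVec_eq_zero_of_step (hα : 0 < α) (hβ : 0 < β) (hA : A.PosSemidef)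
    (hC : C.PosSemidef) (hadd : M + N = shiftMatrix α β) (hsub : M - N = fromBlocks A Bᵀ (-B) C)
    (x : ι ⊕ κ → ℝ) (hx : M *ᵥ x = 0) : x = 0 := by
  have hle := shiftNormSq_le_of_step hA hC hadd hsub (hx.trans (mulVec_zero N).symm)
  have hV := isPosDefHomogeneous_shiftNormSq (ι := ι) (κ := κ) hα hβ
  by_contra h
  linarith [hV.pos x h, map_zero_of_homogeneous hV.map_smul]

theorem eq_zero_of_saddle_mulVec_eq_zero (hA : A.PosDef) (hC : C.PosSemidef) (hα : α ≠ 0)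
    (hβ : β ≠ 0) (hB : Function.Injective Bᵀ.mulVec) (hadd : M + N = shiftMatrix α β)
    (hsub : M - N = fromBlocks A Bᵀ (-B) C) (x : ι ⊕ κ → ℝ)
    (hx : fromBlocks A Bᵀ (-B) C *ᵥ x = 0) : x = 0 := by
  have hfix : M *ᵥ x = N *ᵥ x := sub_eq_zero.mp (by rw [← sub_mulVec, hsub, hx])
  exact eq_zero_of_shiftNormSq_eq_of_two_steps hA hC hα hβ hB hadd hsub hfix hfix rfl

end ShiftSplitting

theorem MGSS_iteration_converges_general
    (n m : ℕ)
    (A : Matrix (Fin n) (Fin n) ℝ) (B : Matrix (Fin m) (Fin n) ℝ)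
    (C : Matrix (Fin m) (Fin m) ℝ)
    (hA : A.PosDef) (hC : C.PosSemidef) (hB : B.rank = m)
    (α β : ℝ) (hα : 0 < α) (hβ : 0 < β)
    (M N : Matrix (Fin n ⊕ Fin m) (Fin n ⊕ Fin m) ℝ)
    (hM : M = (1/2 : ℝ) • Matrix.fromBlocks
      (α • (1 : Matrix (Fin n) (Fin n) ℝ) + A) Bᵀ (-B)
      (β • (1 : Matrix (Fin m) (Fin m) ℝ) + C))
    (hN : N = (1/2 : ℝ) • Matrix.fromBlocks
      (α • (1 : Matrix (Fin n) (Fin n) ℝ) - A) (-Bᵀ) B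
      (β • (1 : Matrix (Fin m) (Fin m) ℝ) - C))
    (b : Fin n ⊕ Fin m → ℝ)
    (u : ℕ → Fin n ⊕ Fin m → ℝ)
    (hiter : ∀ k : ℕ, u (k + 1) = M⁻¹ *ᵥ (N *ᵥ u k + b)) :
    ∃ ustar : Fin n ⊕ Fin m → ℝ,
      (Matrix.fromBlocks A Bᵀ (-B) C) *ᵥ ustar = b ∧
      (∀ v : Fin n ⊕ Fin m → ℝ, (Matrix.fromBlocks A Bᵀ (-B) C) *ᵥ v = b → v = ustar) ∧
      Filter.Tendsto u Filter.atTop (nhds ustar) := by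
  set 𝒜 := fromBlocks A Bᵀ (-B) C
  have hadd : M + N = shiftMatrix α β := by
    rw [hM, hN, shiftMatrix, ← smul_add, fromBlocks_add, fromBlocks_smul]
    congr 1 <;> module
  have hsub : M - N = 𝒜 := by
    rw [hM, hN, ← smul_sub, sub_eq_add_neg, fromBlocks_neg, fromBlocks_add, fromBlocks_smul]
    congr 1 <;> module
  have hBT := mulVec_transpose_injective_of_rank_eq (hB.trans (Fintype.card_fin m).symm)
  have hMdet := isUnit_det_of_mulVec_eq_zero
    (eq_zero_of_mulVec_eq_zero_of_step hα hβ hA.posSemidef hC hadd hsub)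
  have h𝒜det := isUnit_det_of_mulVec_eq_zero
    (eq_zero_of_saddle_mulVec_eq_zero hA hC hα.ne' hβ.ne' hBT hadd hsub)
  have hsol : 𝒜 *ᵥ (𝒜⁻¹ *ᵥ b) = b := by rw [mulVec_mulVec, mul_nonsing_inv _ h𝒜det, one_mulVec]
  refine ⟨𝒜⁻¹ *ᵥ b, hsol, fun v hv => ?_, ?_⟩
  · exact mulVec_injective_iff_isUnit.mpr ((isUnit_iff_isUnit_det _).mpr h𝒜det)
      (hv.trans hsol.symm)
  set T := (M⁻¹ * N).mulVecLin
  have hT : ∀ x, M *ᵥ T x = N *ᵥ x := fun x => by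
    simp [T, mulVec_mulVec, mul_nonsing_inv_cancel_left _ _ hMdet]
  have herr : ∀ k, u (k + 1) - 𝒜⁻¹ *ᵥ b = T (u k - 𝒜⁻¹ *ᵥ b) := fun k => by
    rw [hiter, splitting_error_eq hMdet (hsub ▸ hsol)]
    rfl
  have hconv := (isPosDefHomogeneous_shiftNormSq hα hβ).tendsto_zero_of_two_step_lt T
    (fun x => shiftNormSq_le_of_step hA.posSemidef hC hadd hsub (hT x))
    (fun x hx => shiftNormSq_lt_of_two_steps hA hC hα.ne' hβ.ne' hBT hadd hsub hx (hT x) (hT (T x)))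
    (e := fun k => u k - 𝒜⁻¹ *ᵥ b) herr
  simpa using hconv.add_const (𝒜⁻¹ *ᵥ b)

theorem MGSS_iteration_converges
    (n m : ℕ) (hn : 0 < n) (hm : 0 < m) (hmn : m ≤ n)
    (A : Matrix (Fin n) (Fin n) ℝ) (B : Matrix (Fin m) (Fin n) ℝ)
    (C : Matrix (Fin m) (Fin m) ℝ)
    (hA : A.PosDef) (hC : C.PosSemidef) (hB : B.rank = m)
    (α β : ℝ) (hα : 0 < α) (hβ : 0 < β)
    (M N : Matrix (Fin n ⊕ Fin m) (Fin n ⊕ Fin m) ℝ)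
    (hM : M = (1/2 : ℝ) • Matrix.fromBlocks
      (α • (1 : Matrix (Fin n) (Fin n) ℝ) + A) Bᵀ (-B)
      (β • (1 : Matrix (Fin m) (Fin m) ℝ) + C))
    (hN : N = (1/2 : ℝ) • Matrix.fromBlocks
      (α • (1 : Matrix (Fin n) (Fin n) ℝ) - A) (-Bᵀ) B
      (β • (1 : Matrix (Fin m) (Fin m) ℝ) - C))
    (b : Fin n ⊕ Fin m → ℝ)
    (u : ℕ → Fin n ⊕ Fin m → ℝ)
    (hiter : ∀ k : ℕ, u (k + 1) = M⁻¹ *ᵥ (N *ᵥ u k + b)) :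
    ∃ ustar : Fin n ⊕ Fin m → ℝ,
      (Matrix.fromBlocks A Bᵀ (-B) C) *ᵥ ustar = b ∧
      (∀ v : Fin n ⊕ Fin m → ℝ, (Matrix.fromBlocks A Bᵀ (-B) C) *ᵥ v = b → v = ustar) ∧
      Filter.Tendsto u Filter.atTop (nhds ustar) :=
  MGSS_iteration_converges_general n m A B C hA hC hB α β hα hβ M N hM hN b u hiter
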